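/- arXiv:1911.10345 — 4 statements merged into one kernel-verified Lean document; each statement's English description precedes it below -/
import Mathlib

section
/- Let 𝔊 be a measurable kernel assigning to each x ∈ ℝ^d a Borel measure 𝔊(x,·) on ℝ^d with sup_x 𝔊(x,ℝ^d) = ρ < 1, and let h : ℝ^d → [0,∞) be bounded and measurable. Then the series u(x) := Σ_{n=0}^∞ ∫_{ℝ^d} h(x−y) 𝔊^{*n}(x,dy) converges for every x, satisfies 0 ≤ u(x) ≤ (sup h)/(1−ρ), and u is a solution of the renewal-type equation u(x) = h(x) + ∫_{ℝ^d} u(x−z) 𝔊(x,dz) for all x ∈ ℝ^d. -/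
/-!
Write `T g (x) = ∫ g(x - z) 𝔊(x,dz)` (`renewalOp 𝔊`). The definition of `𝔊^{*(n+1)}` peels off
the last step: `∫ g(x - y) 𝔊^{*(n+1)}(x,dy) = ∫ (T g)(x - y) 𝔊^{*n}(x,dy)`. Hence the `n`-th term
of the series is `Tⁿ h (x)`, and the renewal equation, which needs the first step instead, follows
from `T^{n+1} = T ∘ Tⁿ`. Since `T` multiplies a sup bound by at most `ρ`, the terms are at most
`M ρⁿ`; since `T` commutes with sums of nonnegative functions (monotone convergence),
`U = Σ Tⁿ h` satisfies `U = h + T U`. Working in `ℝ≥0∞` removes all integrability side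
conditions; the bound `U ≤ M / (1 - ρ) < ∞` then transfers everything to `ℝ`.
-/

open MeasureTheory Filter Topology ProbabilityTheory
open scoped ENNReal

noncomputable section

/-- Iterated kernel convolutions: `𝔊^{*0}(x,·) = δ₀` and
`𝔊^{*n}(x,A) = ∫ 𝔊^{*(n-1)}(x,dy) 𝔊(x-y, A-y)`. -/
def iterConv {d : ℕ} (G : EuclideanSpace ℝ (Fin d) → Measure (EuclideanSpace ℝ (Fin d)))
    (x : EuclideanSpace ℝ (Fin d)) : ℕ → Measure (EuclideanSpace ℝ (Fin d))
  | 0 => Measure.dirac 0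
  | n + 1 => (iterConv G x n).bind (fun y => (G (x - y)).map (· + y))

/-- The renewal series `u(x) = Σ_{n=0}^∞ ∫ h(x-y) 𝔊^{*n}(x,dy)`. -/
def renewalSeries {d : ℕ} (G : EuclideanSpace ℝ (Fin d) → Measure (EuclideanSpace ℝ (Fin d)))
    (h : EuclideanSpace ℝ (Fin d) → ℝ) (x : EuclideanSpace ℝ (Fin d)) : ℝ :=
  ∑' n : ℕ, ∫ y, h (x - y) ∂ (iterConv G x n)

section RenewalOperator

variable {E : Type*} [MeasurableSpace E] [AddGroup E]
  {K : Kernel E E} {g : E → ℝ≥0∞}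

def renewalOp (K : Kernel E E) (g : E → ℝ≥0∞) (x : E) : ℝ≥0∞ :=
  ∫⁻ z, g (x - z) ∂K x

lemma renewalOp_le {c r : ℝ≥0∞} (hg : ∀ x, g x ≤ c) (hK : ∀ x, K x Set.univ ≤ r) (x : E) :
    renewalOp K g x ≤ c * r :=
  calc ∫⁻ z, g (x - z) ∂K x ≤ ∫⁻ _, c ∂K x := lintegral_mono fun z => hg (x - z)
    _ = c * K x Set.univ := lintegral_const c
    _ ≤ c * r := by gcongr; exact hK x

lemma iterate_renewalOp_le {c r : ℝ≥0∞} (hg : ∀ x, g x ≤ c) (hK : ∀ x, K x Set.univ ≤ r)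
    (n : ℕ) (x : E) : (renewalOp K)^[n] g x ≤ c * r ^ n := by
  induction n generalizing x with
  | zero => simpa using hg x
  | succ n ih =>
    rw [Function.iterate_succ_apply', pow_succ, ← mul_assoc]
    exact renewalOp_le ih hK x

lemma tsum_iterate_renewalOp_le {c r : ℝ≥0∞} (hg : ∀ x, g x ≤ c)
    (hK : ∀ x, K x Set.univ ≤ r) (x : E) :
    ∑' n, (renewalOp K)^[n] g x ≤ c * (1 - r)⁻¹ :=
  calc ∑' n, (renewalOp K)^[n] g x ≤ ∑' n, c * r ^ n :=
        ENNReal.tsum_le_tsum fun n => iterate_renewalOp_le hg hK n x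
    _ = c * (1 - r)⁻¹ := by rw [ENNReal.tsum_mul_left, ENNReal.tsum_geometric]

variable [MeasurableSub₂ E]

lemma measurable_renewalOp [IsSFiniteKernel K] (hg : Measurable g) :
    Measurable (renewalOp K g) :=
  Measurable.lintegral_kernel_prod_right (f := fun x z => g (x - z))
    (hg.comp (measurable_fst.sub measurable_snd))

lemma measurable_iterate_renewalOp [IsSFiniteKernel K] (hg : Measurable g) (n : ℕ) :
    Measurable ((renewalOp K)^[n] g) := by
  induction n with
  | zero => exact hg
  | succ n ih => rw [Function.iterate_succ']; exact measurable_renewalOp ih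

lemma renewalOp_tsum {g : ℕ → E → ℝ≥0∞} (hg : ∀ n, Measurable (g n)) (x : E) :
    renewalOp K (fun y => ∑' n, g n y) x = ∑' n, renewalOp K (g n) x :=
  lintegral_tsum fun n => ((hg n).comp (measurable_const.sub measurable_id)).aemeasurable

lemma tsum_iterate_renewalOp_eq [IsSFiniteKernel K] (hg : Measurable g) (x : E) :
    ∑' n, (renewalOp K)^[n] g x
      = g x + renewalOp K (fun y => ∑' n, (renewalOp K)^[n] g y) x := by
  rw [tsum_eq_zero_add' ENNReal.summable,
    renewalOp_tsum (measurable_iterate_renewalOp hg)]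
  simp only [Function.iterate_zero_apply, Function.iterate_succ_apply']

lemma toReal_renewalOp_eq_integral {U : E → ℝ≥0∞} (hU : Measurable U) (hfin : ∀ y, U y ≠ ∞)
    (x : E) : (renewalOp K U x).toReal = ∫ z, (U (x - z)).toReal ∂K x :=
  (integral_toReal (hU.comp (measurable_const.sub measurable_id)).aemeasurable
    (ae_of_all _ fun z => (hfin (x - z)).lt_top)).symm

end RenewalOperator

section IterConv

variable {d : ℕ} (K : Kernel (EuclideanSpace ℝ (Fin d)) (EuclideanSpace ℝ (Fin d)))
  [IsSFiniteKernel K]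

lemma measurable_map_add_kernel_sub (x : EuclideanSpace ℝ (Fin d)) :
    Measurable fun y => (K (x - y)).map (· + y) := by
  refine Measure.measurable_of_measurable_coe _ fun A hA => ?_
  simp_rw [Measure.map_apply (measurable_add_const _) hA]
  exact Kernel.measurable_kernel_prodMk_left
    (κ := K.comap (x - ·) (measurable_const.sub measurable_id))
    ((measurable_snd.add measurable_fst) hA)

lemma lintegral_iterConv_eq_iterate_renewalOp {f : EuclideanSpace ℝ (Fin d) → ℝ≥0∞}
    (hf : Measurable f) (x : EuclideanSpace ℝ (Fin d)) (n : ℕ) :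
    ∫⁻ y, f (x - y) ∂iterConv (fun z => K z) x n = (renewalOp K)^[n] f x := by
  induction n generalizing f with
  | zero => simp [iterConv, lintegral_dirac]
  | succ n ih =>
    have hfx : Measurable fun y => f (x - y) := hf.comp (measurable_const.sub measurable_id)
    have peel_last : ∫⁻ y, f (x - y) ∂iterConv (fun z => K z) x (n + 1)
        = ∫⁻ y, renewalOp K f (x - y) ∂iterConv (fun z => K z) x n := by
      rw [iterConv, Measure.lintegral_bind (measurable_map_add_kernel_sub K x).aemeasurable
        hfx.aemeasurable]
      refine lintegral_congr fun y => ?_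
      rw [lintegral_map hfx (measurable_add_const y)]
      simp only [renewalOp, sub_add_eq_sub_sub_swap]
    rw [peel_last, ih (measurable_renewalOp hf), Function.iterate_succ_apply]

lemma hasSum_integral_iterConv {h : EuclideanSpace ℝ (Fin d) → ℝ} (hmeas : Measurable h)
    (hpos : ∀ x, 0 ≤ h x) {x : EuclideanSpace ℝ (Fin d)}
    (hfin : ∑' n, (renewalOp K)^[n] (fun y => ENNReal.ofReal (h y)) x ≠ ∞) :
    HasSum (fun n => ∫ y, h (x - y) ∂iterConv (fun z => K z) x n)
      (∑' n, (renewalOp K)^[n] (fun y => ENNReal.ofReal (h y)) x).toReal := by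
  have hterm : ∀ n, ∫ y, h (x - y) ∂iterConv (fun z => K z) x n
      = ((renewalOp K)^[n] (fun y => ENNReal.ofReal (h y)) x).toReal := fun n => by
    rw [integral_eq_lintegral_of_nonneg_ae (ae_of_all _ fun y => hpos (x - y))
      (hmeas.comp (measurable_const.sub measurable_id)).aestronglyMeasurable,
      lintegral_iterConv_eq_iterate_renewalOp K hmeas.ennreal_ofReal]
  simp_rw [hterm]
  rw [ENNReal.tsum_toReal_eq (ENNReal.ne_top_of_tsum_ne_top hfin)]
  exact ENNReal.hasSum_toReal hfin

end IterConv

/-- Theorem 2.1 of the paper, analytic form.  If `𝔊` is a measurable kernel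
on `ℝ^d` with `sup_x 𝔊(x,ℝ^d) = ρ < 1` and `h : ℝ^d → [0,∞)` is bounded (by `M`) and
measurable, then the series `u(x) := Σ_n ∫ h(x-y) 𝔊^{*n}(x,dy)` converges for every `x`,
satisfies `0 ≤ u(x) ≤ M/(1-ρ)`, and solves the renewal-type equation
`u(x) = h(x) + ∫ u(x-z) 𝔊(x,dz)`. -/
theorem renewal_series_solves_renewal_equation
    {d : ℕ} (𝔊 : Kernel (EuclideanSpace ℝ (Fin d)) (EuclideanSpace ℝ (Fin d)))
    (ρ : ℝ) (hρ0 : 0 ≤ ρ) (hρ1 : ρ < 1)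
    (hsup : (⨆ x, 𝔊 x Set.univ) = ENNReal.ofReal ρ)
    (h : EuclideanSpace ℝ (Fin d) → ℝ) (hmeas : Measurable h)
    (hpos : ∀ x, 0 ≤ h x) (M : ℝ) (hM : ∀ x, h x ≤ M) :
    (∀ x, Summable fun n : ℕ => ∫ y, h (x - y) ∂ (iterConv (fun z => 𝔊 z) x n)) ∧
    (∀ x, 0 ≤ renewalSeries (fun z => 𝔊 z) h x) ∧
    (∀ x, renewalSeries (fun z => 𝔊 z) h x ≤ M / (1 - ρ)) ∧
    (∀ x, renewalSeries (fun z => 𝔊 z) h x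
        = h x + ∫ z, renewalSeries (fun w => 𝔊 w) h (x - z) ∂ (𝔊 x)) := by
  have hK : ∀ x, 𝔊 x Set.univ ≤ ENNReal.ofReal ρ := fun x => hsup ▸ le_iSup (𝔊 · Set.univ) x
  have : IsFiniteKernel 𝔊 := ⟨⟨_, ENNReal.ofReal_lt_top, hK⟩⟩
  set f := fun y => ENNReal.ofReal (h y)
  set U := fun x => ∑' n, (renewalOp 𝔊)^[n] f x
  have hU_le : ∀ x, U x ≤ ENNReal.ofReal (M / (1 - ρ)) := fun x =>
    calc U x ≤ ENNReal.ofReal M * (1 - ENNReal.ofReal ρ)⁻¹ :=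
          tsum_iterate_renewalOp_le (fun y => ENNReal.ofReal_le_ofReal (hM y)) hK x
      _ = ENNReal.ofReal (M / (1 - ρ)) := by
          rw [ENNReal.ofReal_div_of_pos (by linarith), ENNReal.ofReal_sub 1 hρ0,
            ENNReal.ofReal_one, div_eq_mul_inv]
  have hU_fin : ∀ x, U x ≠ ∞ := fun x => ne_top_of_le_ne_top ENNReal.ofReal_ne_top (hU_le x)
  have hsum := fun x => hasSum_integral_iterConv 𝔊 hmeas hpos (hU_fin x)
  have hu : ∀ x, renewalSeries (fun z => 𝔊 z) h x = (U x).toReal := fun x => (hsum x).tsum_eq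
  refine ⟨fun x => (hsum x).summable, fun x => hu x ▸ ENNReal.toReal_nonneg,
    fun x => hu x ▸ ENNReal.toReal_le_of_le_ofReal
      (div_nonneg ((hpos 0).trans (hM 0)) (by linarith)) (hU_le x), fun x => ?_⟩
  have hU_eq : U x = f x + renewalOp 𝔊 U x := tsum_iterate_renewalOp_eq hmeas.ennreal_ofReal x
  have hTU_fin : renewalOp 𝔊 U x ≠ ∞ := (ENNReal.add_ne_top.1 (hU_eq ▸ hU_fin x)).2
  have hU_meas : Measurable U := Measurable.tsum (measurable_iterate_renewalOp hmeas.ennreal_ofReal)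
  simp_rw [hu]
  rw [hU_eq, ENNReal.toReal_add ENNReal.ofReal_ne_top hTU_fin, ENNReal.toReal_ofReal (hpos x),
    toReal_renewalOp_eq_integral hU_meas hU_fin]

end
end

section
/- Let F be a weakly subexponential probability distribution on ℝ^d_+, and let φ : ℝ^d_+ → ℝ^d_+ be increasing in each coordinate with φ(x)⁰ → ∞ and (x−φ(x))⁰ → ∞ as x⁰ → ∞, such that F̄ is φ-insensitive. Then ∫_{{y ∈ ℝ^d_+ : φ(x) < y < x−φ(x)}} F̄(x−y) F(dy) = o(F̄(x)) as x⁰ → ∞. -/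
/-!
Write `F̄^{*2}(x) = ∫ F̄(x - y) F(dy)` and split the integral over the three disjoint regions
`y ≤ φ(x)`, the middle region, and `y ≰ x`. Since `F` lives on the positive orthant,
`F̄(x - y) ≥ F̄(x)` on the first region and `F̄(x - y) = 1` on the third, so the middle integral
is at most `F̄^{*2}(x) - (1 + F(φ(x))) F̄(x)`. After dividing by `F̄(x)` this bound tends to
`2 - 1 - 1 = 0`, because `F(φ(x)) → 1` as `φ(x)⁰ → ∞`.
-/

open MeasureTheory Filter Topology
open scoped ENNReal

noncomputable section

/-- The filter of `x⁰ = min_{1≤i≤d} x_i → ∞`. -/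
def minAtTop (d : ℕ) : Filter (EuclideanSpace ℝ (Fin d)) :=
  Filter.comap (fun x => ⨅ i, x i) Filter.atTop

/-- The multivariate tail `F̄(x) = 1 - F((-∞,x])` (componentwise order). -/
def mvTail {d : ℕ} (F : Measure (EuclideanSpace ℝ (Fin d)))
    (x : EuclideanSpace ℝ (Fin d)) : ℝ :=
  (F {y | ¬ ∀ i, y i ≤ x i}).toReal

/-- Convolution of two measures (distribution of the sum of independent vectors). -/
def mvConv {d : ℕ} (F G : Measure (EuclideanSpace ℝ (Fin d))) :
    Measure (EuclideanSpace ℝ (Fin d)) :=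
  (F.prod G).map (fun p => p.1 + p.2)

namespace MeasureTheory.Measure

variable {M : Type*} [AddMonoid M] [MeasurableSpace M] [MeasurableAdd₂ M]

theorem measurable_measure_preimage_add_left (ν : Measure M) [SFinite ν] {s : Set M}
    (hs : MeasurableSet s) : Measurable fun y => ν ((y + ·) ⁻¹' s) :=
  measurable_measure_prodMk_left (measurable_add hs)

theorem conv_apply (μ ν : Measure M) [SFinite ν] {s : Set M} (hs : MeasurableSet s) :
    (μ ∗ ν) s = ∫⁻ y, ν ((y + ·) ⁻¹' s) ∂μ := by
  rw [conv, map_apply measurable_add hs, prod_apply (measurable_add hs)]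
  rfl

end MeasureTheory.Measure

theorem eventually_forall_ge_of_tendsto_iInf {α ι : Type*} [Finite ι] {l : Filter α}
    {f : α → ι → ℝ} (hf : Tendsto (fun a => ⨅ i, f a i) l atTop) (c : ℝ) :
    ∀ᶠ a in l, ∀ i, c ≤ f a i :=
  (hf.eventually_ge_atTop c).mono fun _ ha i =>
    ha.trans (ciInf_le (Set.finite_range _).bddBelow i)

section LowerOrthant

variable {ι : Type*}

def lowerOrthant (x : EuclideanSpace ℝ ι) : Set (EuclideanSpace ℝ ι) := {z | ∀ i, z i ≤ x i}

theorem lowerOrthant_subset_lowerOrthant {x y : EuclideanSpace ℝ ι} (h : ∀ i, x i ≤ y i) :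
    lowerOrthant x ⊆ lowerOrthant y :=
  fun _ hz i => (hz i).trans (h i)

theorem preimage_add_lowerOrthant (y x : EuclideanSpace ℝ ι) :
    (y + ·) ⁻¹' lowerOrthant x = lowerOrthant (x - y) := by
  ext z
  simp [lowerOrthant, le_sub_iff_add_le']

theorem measurableSet_lowerOrthant [Countable ι] (x : EuclideanSpace ℝ ι) :
    MeasurableSet (lowerOrthant x) := by
  simp only [lowerOrthant, Set.ofPred_forall]
  exact MeasurableSet.iInter fun i => measurableSet_le (by fun_prop) measurable_const

theorem tendsto_measure_lowerOrthant {α : Type*} [Finite ι] {l : Filter α}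
    (F : Measure (EuclideanSpace ℝ ι)) {h : α → EuclideanSpace ℝ ι}
    (hh : Tendsto (fun a => ⨅ i, h a i) l atTop) :
    Tendsto (fun a => F (lowerOrthant (h a))) l (𝓝 (F Set.univ)) := by
  have hmono : Monotone fun c : ℝ => {z : EuclideanSpace ℝ ι | ∀ i, z i ≤ c} :=
    fun _ _ hab _ hz i => (hz i).trans hab
  have hunion : ⋃ c : ℝ, {z : EuclideanSpace ℝ ι | ∀ i, z i ≤ c} = Set.univ :=
    Set.eq_univ_of_forall fun z =>
      Set.mem_iUnion.2 ⟨⨆ i, z i, fun i => le_ciSup (Set.finite_range _).bddAbove i⟩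
  have hconst := tendsto_measure_iUnion_atTop (μ := F) hmono
  rw [hunion] at hconst
  refine tendsto_of_tendsto_of_tendsto_of_le_of_le (hconst.comp hh) tendsto_const_nhds
    (fun a => measure_mono fun z hz i => ?_) fun a => measure_mono (Set.subset_univ _)
  exact (hz i).trans (ciInf_le (Set.finite_range _).bddBelow i)

theorem setLIntegral_add_mul_add_mul_le_conv [Fintype ι] {F G : Measure (EuclideanSpace ℝ ι)}
    [SFinite G] (hF : ∀ᵐ y ∂F, ∀ i, 0 ≤ y i) (hG : ∀ᵐ z ∂G, ∀ i, 0 ≤ z i)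
    {h x : EuclideanSpace ℝ ι} (hhx : ∀ i, h i ≤ x i) {M : Set (EuclideanSpace ℝ ι)}
    (hM : M ⊆ (lowerOrthant h)ᶜ ∩ lowerOrthant x) :
    ∫⁻ y in M, G (lowerOrthant (x - y))ᶜ ∂F + G (lowerOrthant x)ᶜ * F (lowerOrthant h)
      + G Set.univ * F (lowerOrthant x)ᶜ ≤ (F ∗ G) (lowerOrthant x)ᶜ := by
  have hle_of_nonneg (y : EuclideanSpace ℝ ι) (hy : ∀ i, 0 ≤ y i) :
      G (lowerOrthant x)ᶜ ≤ G (lowerOrthant (x - y))ᶜ :=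
    measure_mono <| Set.compl_subset_compl.2 <|
      lowerOrthant_subset_lowerOrthant fun i => by simp [hy i]
  have hle_of_not_le (y : EuclideanSpace ℝ ι) (hy : y ∈ (lowerOrthant x)ᶜ) :
      G Set.univ ≤ G (lowerOrthant (x - y))ᶜ := by
    refine measure_mono_ae (hG.mono fun z hz _ hzxy => hy fun i => ?_)
    have := hzxy i
    simp only [PiLp.sub_apply] at this
    linarith [hz i]
  have hdisj : Disjoint (M ∪ lowerOrthant h) (lowerOrthant x)ᶜ :=
    Set.disjoint_compl_right_iff_subset.2 <| Set.union_subset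
      (hM.trans Set.inter_subset_right) (lowerOrthant_subset_lowerOrthant hhx)
  rw [Measure.conv_apply F G (measurableSet_lowerOrthant x).compl]
  simp_rw [Set.preimage_compl, preimage_add_lowerOrthant]
  calc _ ≤ ∫⁻ y in M, G (lowerOrthant (x - y))ᶜ ∂F
          + ∫⁻ y in lowerOrthant h, G (lowerOrthant (x - y))ᶜ ∂F
          + ∫⁻ y in (lowerOrthant x)ᶜ, G (lowerOrthant (x - y))ᶜ ∂F := by
        rw [← setLIntegral_const, ← setLIntegral_const]
        refine add_le_add (add_le_add le_rfl ?_) ?_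
        · exact setLIntegral_mono_ae' (measurableSet_lowerOrthant h)
            (hF.mono fun y hy _ => hle_of_nonneg y hy)
        · exact setLIntegral_mono' (measurableSet_lowerOrthant x).compl hle_of_not_le
    _ = ∫⁻ y in M ∪ lowerOrthant h ∪ (lowerOrthant x)ᶜ, G (lowerOrthant (x - y))ᶜ ∂F := by
        rw [lintegral_union (measurableSet_lowerOrthant x).compl hdisj,
          lintegral_union (measurableSet_lowerOrthant h)
            (Set.disjoint_right.2 fun y hy hyM => (hM hyM).1 hy)]
    _ ≤ _ := setLIntegral_le_lintegral _ _

end LowerOrthant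

theorem setIntegral_mvTail_sub_add_le_mvTail_mvConv {d : ℕ}
    (F : Measure (EuclideanSpace ℝ (Fin d))) [IsProbabilityMeasure F]
    (hF : ∀ᵐ y ∂F, ∀ i, 0 ≤ y i) {h x : EuclideanSpace ℝ (Fin d)} (hhx : ∀ i, h i ≤ x i)
    {M : Set (EuclideanSpace ℝ (Fin d))}
    (hM : M ⊆ (lowerOrthant h)ᶜ ∩ lowerOrthant x) :
    ∫ y in M, mvTail F (x - y) ∂F + mvTail F x * (F (lowerOrthant h)).toReal + mvTail F x
      ≤ mvTail (mvConv F F) x := by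
  have hmeas : Measurable fun y => F (lowerOrthant (x - y))ᶜ := by
    simpa only [Set.preimage_compl, preimage_add_lowerOrthant] using
      Measure.measurable_measure_preimage_add_left F (measurableSet_lowerOrthant x).compl
  have hintegral : ∫ y in M, mvTail F (x - y) ∂F
      = (∫⁻ y in M, F (lowerOrthant (x - y))ᶜ ∂F).toReal :=
    integral_toReal hmeas.aemeasurable (ae_of_all _ fun _ => measure_lt_top _ _)
  have key := setLIntegral_add_mul_add_mul_le_conv hF hF hhx hM
  rw [measure_univ, one_mul] at key
  obtain ⟨hfin, hfin_tail⟩ := ENNReal.add_ne_top.1 (ne_top_of_le_ne_top (measure_ne_top _ _) key)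
  obtain ⟨hfin_integral, hfin_mul⟩ := ENNReal.add_ne_top.1 hfin
  have key_real := ENNReal.toReal_mono (measure_ne_top _ _) key
  rw [ENNReal.toReal_add hfin hfin_tail, ENNReal.toReal_add hfin_integral hfin_mul,
    ENNReal.toReal_mul] at key_real
  rw [hintegral]
  -- `mvTail F z` is `(F (lowerOrthant z)ᶜ).toReal` and `mvConv F F` is `F ∗ F` by definition.
  exact key_real

theorem middle_region_integral_is_little_o_general
    {d : ℕ} (hd : 0 < d) (F : Measure (EuclideanSpace ℝ (Fin d)))
    [IsProbabilityMeasure F]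
    (hsupp : F {x | ¬ ∀ i, 0 < x i} = 0)
    (hFpos : ∀ x, 0 < mvTail F x)
    (hsubexp : Filter.Tendsto (fun x => mvTail (mvConv F F) x / mvTail F x)
      (minAtTop d) (nhds 2))
    (φ : EuclideanSpace ℝ (Fin d) → EuclideanSpace ℝ (Fin d))
    (hφinf : Filter.Tendsto (fun x => ⨅ i, φ x i) (minAtTop d) Filter.atTop)
    (hφinf' : Filter.Tendsto (fun x => ⨅ i, (x i - φ x i)) (minAtTop d) Filter.atTop) :
    Filter.Tendsto
      (fun x =>
        (∫ y in {y | (∀ i, φ x i < y i) ∧ ∀ i, y i < x i - φ x i},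
            mvTail F (x - y) ∂F) / mvTail F x)
      (minAtTop d) (nhds 0) := by
  have hF : ∀ᵐ y ∂F, ∀ i, 0 ≤ y i := (ae_iff.2 hsupp).mono fun _ hy i => (hy i).le
  have hmass : Tendsto (fun x => (F (lowerOrthant (φ x))).toReal) (minAtTop d) (𝓝 1) := by
    simpa [Function.comp_def] using
      (ENNReal.tendsto_toReal (by simp)).comp (tendsto_measure_lowerOrthant F hφinf)
  have hbound : ∀ᶠ x in minAtTop d,
      (∫ y in {y | (∀ i, φ x i < y i) ∧ ∀ i, y i < x i - φ x i}, mvTail F (x - y) ∂F)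
          / mvTail F x
        ≤ mvTail (mvConv F F) x / mvTail F x - 1 - (F (lowerOrthant (φ x))).toReal := by
    filter_upwards [eventually_forall_ge_of_tendsto_iInf hφinf 0,
      eventually_forall_ge_of_tendsto_iInf hφinf' 0] with x hφ_nonneg hφ_le
    have hmiddle : {y | (∀ i, φ x i < y i) ∧ ∀ i, y i < x i - φ x i}
        ⊆ (lowerOrthant (φ x))ᶜ ∩ lowerOrthant x := fun y hy =>
      ⟨fun hle => (hy.1 ⟨0, hd⟩).not_ge (hle ⟨0, hd⟩), fun i => by linarith [hy.2 i, hφ_nonneg i]⟩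
    have key := setIntegral_mvTail_sub_add_le_mvTail_mvConv F hF
      (fun i => by linarith [hφ_le i]) hmiddle
    have hpos := hFpos x
    rw [div_le_iff₀ hpos, sub_sub, sub_mul, div_mul_cancel₀ _ hpos.ne']
    linarith
  have hlimit : Tendsto (fun x => mvTail (mvConv F F) x / mvTail F x - 1
      - (F (lowerOrthant (φ x))).toReal) (minAtTop d) (𝓝 0) := by
    convert (hsubexp.sub_const 1).sub hmass using 2
    norm_num
  exact tendsto_of_tendsto_of_tendsto_of_le_of_le' tendsto_const_nhds hlimit
    (Eventually.of_forall fun x => div_nonneg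
      (setIntegral_nonneg_of_ae (ae_of_all _ fun _ => ENNReal.toReal_nonneg)) (hFpos x).le) hbound

/-- multivariate middle-region estimate, used for `K₂₃` and `J₃` in the
proofs of Lemma 3.8 and Theorem 3.5 of the paper.  If `F` is weakly subexponential on
`ℝ^d_+` and `F̄` is `φ`-insensitive for a componentwise increasing `φ` with `φ(x)⁰ → ∞`
and `(x-φ(x))⁰ → ∞`, then
`∫_{φ(x) < y < x-φ(x)} F̄(x-y) F(dy) = o(F̄(x))` as `x⁰ → ∞`. -/
theorem middle_region_integral_is_little_o
    {d : ℕ} (hd : 0 < d) (F : Measure (EuclideanSpace ℝ (Fin d)))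
    [IsProbabilityMeasure F]
    (hsupp : F {x | ¬ ∀ i, 0 < x i} = 0)
    (hFpos : ∀ x, 0 < mvTail F x)
    (hsubexp : Filter.Tendsto (fun x => mvTail (mvConv F F) x / mvTail F x)
      (minAtTop d) (nhds 2))
    (φ : EuclideanSpace ℝ (Fin d) → EuclideanSpace ℝ (Fin d))
    (hφpos : ∀ x, (∀ i, 0 < x i) → ∀ i, 0 < φ x i)
    (hφmono : ∀ x y, (∀ i, x i ≤ y i) → ∀ i, φ x i ≤ φ y i)
    (hφinf : Filter.Tendsto (fun x => ⨅ i, φ x i) (minAtTop d) Filter.atTop)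
    (hφinf' : Filter.Tendsto (fun x => ⨅ i, (x i - φ x i)) (minAtTop d) Filter.atTop)
    (hinsens : Filter.Tendsto (fun x => mvTail F (x + φ x) / mvTail F x)
      (minAtTop d) (nhds 1)) :
    Filter.Tendsto
      (fun x =>
        (∫ y in {y | (∀ i, φ x i < y i) ∧ ∀ i, y i < x i - φ x i},
            mvTail F (x - y) ∂F) / mvTail F x)
      (minAtTop d) (nhds 0) :=
  middle_region_integral_is_little_o_general hd F hsupp hFpos hsubexp φ hφinf hφinf'

end
end

section
/- Let d = 2 and for i = 1, 2 let F_i be the probability distribution on [0,∞) with tail F̄_i(z) = c_i z^{−1−α_i} for z ≥ 1 (and F̄_i(z) = c_i for 0 ≤ z < 1), where α_i > 0 and 0 < c_i ≤ 1. Let F = F_1 ⊗ F_2 be the product distribution on ℝ²_+, so that F̄(x) = 1 − F_1(x_1) F_2(x_2) = F̄_1(x_1) F_2(x_2) + F̄_2(x_2). Then F is weakly subexponential on ℝ²_+: lim_{x⁰→∞} F̄^{*2}(x)/F̄(x) = 2, where x⁰ = min(x_1, x_2) and F^{*2} is the distribution of the sum of two independent F-distributed vectors. -/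
open MeasureTheory Filter Topology
open scoped ENNReal

noncomputable section

/-- Tail of a distribution on `ℝ²` (componentwise order). -/
def tail2 (F : Measure (ℝ × ℝ)) (x : ℝ × ℝ) : ℝ :=
  (F {y : ℝ × ℝ | ¬ (y.1 ≤ x.1 ∧ y.2 ≤ x.2)}).toReal

/-- Convolution: distribution of the sum of two independent `F`-distributed vectors. -/
def conv2 (F : Measure (ℝ × ℝ)) : Measure (ℝ × ℝ) :=
  (F.prod F).map (fun p => p.1 + p.2)

/-- The filter `x⁰ = min(x₁,x₂) → ∞` on `ℝ²`. -/
def minAtTop2 : Filter (ℝ × ℝ) :=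
  Filter.comap (fun x : ℝ × ℝ => min x.1 x.2) Filter.atTop

/-! If `G` is the tail of a distribution on the nonnegative orthant and `X, Y` are independent
with that distribution, then `X + Y ≰ x` as soon as `X ≰ x` or `Y ≰ x`, so
`2G(x) - G(x)² ≤ G^{*2}(x)`; conversely, if `X + Y ≰ x` then `X ≰ t x`, or `Y ≰ t x`, or both
`X, Y ≰ (1 - t) x`, so `G^{*2}(x) ≤ 2G(tx) + G((1-t)x)²`. Hence `G^{*2}(x)/G(x) → 2` as soon as
`G(tx) ≤ k(t) G(x)` eventually, with `k(t) → 1` as `t → 1⁻`, because `G → 0`.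
For the product of the Pareto marginals, `G(x) = 1 - (1 - u)(1 - v)` where `u, v` are the
marginal tails at `x₁, x₂`, and scaling `x` by `t < 1` multiplies `u, v` by `t^{-1-αᵢ} ≥ 1`;
this gives the bound with `k(t) = max(t^{-1-α₁}, t^{-1-α₂})`. -/

open Set

lemma minAtTop2_eq_atTop : minAtTop2 = atTop := by
  refine le_antisymm ?_ ?_
  · rw [← prod_atTop_atTop_eq]
    exact le_prod.2
      ⟨tendsto_atTop_mono (fun x => min_le_left _ _) tendsto_comap,
        tendsto_atTop_mono (fun x => min_le_right _ _) tendsto_comap⟩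
  · refine tendsto_comap_iff.2 (tendsto_atTop_atTop_of_monotone ?_ fun b => ⟨(b, b), by simp⟩)
    exact fun x y h => min_le_min h.1 h.2

instance isProbabilityMeasure_conv2 (μ : Measure (ℝ × ℝ)) [IsProbabilityMeasure μ] :
    IsProbabilityMeasure (conv2 μ) :=
  Measure.isProbabilityMeasure_map measurable_add.aemeasurable

section Tail

variable (μ : Measure (ℝ × ℝ))

lemma tail2_eq_real_compl (x : ℝ × ℝ) : tail2 μ x = μ.real (Iic x)ᶜ := rfl

lemma tail2_conv2_eq [SFinite μ] (x : ℝ × ℝ) :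
    tail2 (conv2 μ) x = (μ.prod μ).real ((fun p => p.1 + p.2) ⁻¹' (Iic x)ᶜ) :=
  map_measureReal_apply measurable_add measurableSet_Iic.compl

variable [IsProbabilityMeasure μ]

lemma tail2_eq_one_sub (x : ℝ × ℝ) : tail2 μ x = 1 - μ.real (Iic x) :=
  probReal_compl_eq_one_sub measurableSet_Iic

lemma tendsto_tail2_atTop : Tendsto (tail2 μ) atTop (𝓝 0) := by
  have := (ENNReal.tendsto_toReal (measure_ne_top μ univ)).comp (tendsto_measure_Iic_atTop μ)
  rw [funext (tail2_eq_one_sub μ)]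
  simpa [Measure.real] using (tendsto_const_nhds (x := (1 : ℝ))).sub this

lemma two_mul_tail2_sub_sq_le_tail2_conv2 (hμ : ∀ᵐ y ∂μ, 0 ≤ y) (x : ℝ × ℝ) :
    2 * tail2 μ x - tail2 μ x ^ 2 ≤ tail2 (conv2 μ) x := by
  have hsub : ((fun p => p.1 + p.2) ⁻¹' Iic x : Set ((ℝ × ℝ) × (ℝ × ℝ))) ≤ᵐ[μ.prod μ]
      Iic x ×ˢ Iic x := by
    filter_upwards [Measure.quasiMeasurePreserving_fst.ae hμ,
      Measure.quasiMeasurePreserving_snd.ae hμ] with p h₁ h₂ hp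
    exact ⟨(le_add_of_nonneg_right h₂).trans hp, (le_add_of_nonneg_left h₁).trans hp⟩
  have hle : (conv2 μ).real (Iic x) ≤ μ.real (Iic x) ^ 2 := by
    rw [conv2, map_measureReal_apply measurable_add measurableSet_Iic, sq,
      ← measureReal_prod_prod]
    exact ENNReal.toReal_mono (measure_ne_top _ _) (measure_mono_ae hsub)
  rw [tail2_eq_one_sub, tail2_eq_one_sub]
  nlinarith

lemma tail2_conv2_add_le (x y : ℝ × ℝ) :
    tail2 (conv2 μ) (x + y) ≤ 2 * tail2 μ x + tail2 μ y ^ 2 := by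
  have hsub : (fun p => p.1 + p.2) ⁻¹' (Iic (x + y))ᶜ ⊆
      ((Iic x)ᶜ ×ˢ univ ∪ univ ×ˢ (Iic x)ᶜ) ∪ (Iic y)ᶜ ×ˢ (Iic y)ᶜ := by
    rintro ⟨a, b⟩ hab
    simp only [mem_preimage, mem_compl_iff, mem_Iic] at hab
    simp only [mem_union, mem_prod, mem_compl_iff, mem_Iic, mem_univ, and_true, true_and]
    by_contra! h
    obtain ⟨⟨ha, hb⟩, hy⟩ := h
    by_cases hay : a ≤ y
    · exact hab (by simpa [add_comm] using add_le_add hb hay)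
    · exact hab (add_le_add ha (hy hay))
  calc tail2 (conv2 μ) (x + y) ≤ _ := (tail2_conv2_eq μ _).trans_le (measureReal_mono hsub)
    _ ≤ _ := (measureReal_union_le _ _).trans (add_le_add_left (measureReal_union_le _ _) _)
    _ = 2 * tail2 μ x + tail2 μ y ^ 2 := by simp [tail2_eq_real_compl]; ring

lemma two_sub_tail2_le_tail2_conv2_div (hμ : ∀ᵐ y ∂μ, 0 ≤ y) {x : ℝ × ℝ}
    (hx : 0 < tail2 μ x) : 2 - tail2 μ x ≤ tail2 (conv2 μ) x / tail2 μ x := by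
  rw [le_div_iff₀ hx]
  linarith [two_mul_tail2_sub_sq_le_tail2_conv2 μ hμ x]

lemma tail2_conv2_div_le {x : ℝ × ℝ} (hx : 0 < tail2 μ x) {t a b : ℝ}
    (ha : tail2 μ (t • x) ≤ a * tail2 μ x) (hb : tail2 μ ((1 - t) • x) ≤ b * tail2 μ x) :
    tail2 (conv2 μ) x / tail2 μ x ≤ 2 * a + b ^ 2 * tail2 μ x := by
  have hsplit : x = t • x + (1 - t) • x := by rw [← add_smul, add_sub_cancel, one_smul]
  rw [div_le_iff₀ hx]
  calc tail2 (conv2 μ) x ≤ 2 * tail2 μ (t • x) + tail2 μ ((1 - t) • x) ^ 2 := by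
        conv_lhs => rw [hsplit]
        exact tail2_conv2_add_le μ _ _
    _ ≤ 2 * (a * tail2 μ x) + (b * tail2 μ x) ^ 2 := by
        gcongr
        exact measureReal_nonneg
    _ = (2 * a + b ^ 2 * tail2 μ x) * tail2 μ x := by ring

theorem tendsto_tail2_conv2_div_tail2 (hμ : ∀ᵐ y ∂μ, 0 ≤ y)
    (hpos : ∀ᶠ x in atTop, 0 < tail2 μ x) (k : ℝ → ℝ) (hk : Tendsto k (𝓝[<] 1) (𝓝 1))
    (hscale : ∀ t ∈ Ioo (0 : ℝ) 1, ∀ᶠ x in atTop, tail2 μ (t • x) ≤ k t * tail2 μ x) :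
    Tendsto (fun x => tail2 (conv2 μ) x / tail2 μ x) atTop (𝓝 2) := by
  have hG := tendsto_tail2_atTop μ
  refine tendsto_order.2 ⟨fun a ha => ?_, fun b hb => ?_⟩
  · have hlow : ∀ᶠ x in atTop, a < 2 - tail2 μ x :=
      (tendsto_const_nhds.sub hG).eventually_const_lt (by simpa using ha)
    filter_upwards [hpos, hlow] with x hx hax
    exact hax.trans_le (two_sub_tail2_le_tail2_conv2_div μ hμ hx)
  · obtain ⟨t, hkt, ht⟩ : ∃ t, 2 * k t < b ∧ t ∈ Ioo (0 : ℝ) 1 :=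
      (((hk.const_mul 2).eventually_lt_const (by linarith)).and
        (Ioo_mem_nhdsLT zero_lt_one)).exists
    have hup : ∀ᶠ x in atTop, 2 * k t + k (1 - t) ^ 2 * tail2 μ x < b :=
      (tendsto_const_nhds.add (hG.const_mul _)).eventually_lt_const (by simpa using hkt)
    filter_upwards [hpos, hscale t ht, hscale (1 - t) ⟨by linarith [ht.2], by linarith [ht.1]⟩,
      hup] with x hx hkx hkx' hbx
    exact (tail2_conv2_div_le μ hx hkx hkx').trans_lt hbx

end Tail

lemma one_sub_mul_one_sub_le_max_mul {a b u v : ℝ} (ha : 1 ≤ a) (hb : 1 ≤ b) (hu : 0 ≤ u)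
    (hv : 0 ≤ v) : 1 - (1 - a * u) * (1 - b * v) ≤ max a b * (1 - (1 - u) * (1 - v)) := by
  have hka : a ≤ max a b := le_max_left a b
  have hkb : b ≤ max a b := le_max_right a b
  have hab : max a b ≤ a * b := max_le (by nlinarith) (by nlinarith)
  nlinarith [mul_nonneg (sub_nonneg.2 hka) hu, mul_nonneg (sub_nonneg.2 hkb) hv,
    mul_nonneg (sub_nonneg.2 hab) (mul_nonneg hu hv)]

section Product

variable (F₁ F₂ : Measure ℝ) [IsProbabilityMeasure F₁] [IsProbabilityMeasure F₂]

lemma tail2_prod (x : ℝ × ℝ) :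
    tail2 (F₁.prod F₂) x = 1 - (1 - F₁.real (Ioi x.1)) * (1 - F₂.real (Ioi x.2)) := by
  rw [tail2_eq_one_sub, Iic_prod_eq, measureReal_prod_prod, ← compl_Ioi, ← compl_Ioi,
    probReal_compl_eq_one_sub measurableSet_Ioi, probReal_compl_eq_one_sub measurableSet_Ioi]

lemma measureReal_Ioi_fst_le_tail2_prod (x : ℝ × ℝ) :
    F₁.real (Ioi x.1) ≤ tail2 (F₁.prod F₂) x := by
  rw [tail2_prod]
  nlinarith [measureReal_le_one (μ := F₁) (s := Ioi x.1),
    measureReal_nonneg (μ := F₂) (s := Ioi x.2)]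

lemma tail2_prod_smul_le {t a b : ℝ} {x : ℝ × ℝ} (ha : 1 ≤ a) (hb : 1 ≤ b)
    (h₁ : F₁.real (Ioi (t * x.1)) = a * F₁.real (Ioi x.1))
    (h₂ : F₂.real (Ioi (t * x.2)) = b * F₂.real (Ioi x.2)) :
    tail2 (F₁.prod F₂) (t • x) ≤ max a b * tail2 (F₁.prod F₂) x := by
  rw [tail2_prod, tail2_prod, Prod.smul_fst, Prod.smul_snd, smul_eq_mul, smul_eq_mul, h₁, h₂]
  exact one_sub_mul_one_sub_le_max_mul ha hb measureReal_nonneg measureReal_nonneg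

end Product

lemma measureReal_Ioi_mul_eq_rpow_mul {F : Measure ℝ} {c α : ℝ}
    (htail : ∀ z : ℝ, 0 ≤ z → (F (Ioi z)).toReal = c * (max z 1) ^ (-1 - α))
    {t z : ℝ} (ht : 0 < t) (hz : 1 ≤ z) (htz : 1 ≤ t * z) :
    F.real (Ioi (t * z)) = t ^ (-1 - α) * F.real (Ioi z) := by
  rw [Measure.real, Measure.real, htail _ (by positivity), htail _ (by positivity),
    max_eq_left htz, max_eq_left hz, Real.mul_rpow ht.le (by positivity)]
  ring

theorem product_pareto_weakly_subexponential_general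
    (α₁ α₂ c₁ c₂ : ℝ) (hα₁ : 0 < α₁) (hα₂ : 0 < α₂)
    (hc₁ : 0 < c₁)
    (F₁ F₂ : Measure ℝ) [IsProbabilityMeasure F₁] [IsProbabilityMeasure F₂]
    (hsupp₁ : F₁ (Set.Iio (0 : ℝ)) = 0) (hsupp₂ : F₂ (Set.Iio (0 : ℝ)) = 0)
    (htail₁ : ∀ z : ℝ, 0 ≤ z →
      (F₁ (Set.Ioi z)).toReal = c₁ * (max z 1) ^ (-1 - α₁))
    (htail₂ : ∀ z : ℝ, 0 ≤ z →
      (F₂ (Set.Ioi z)).toReal = c₂ * (max z 1) ^ (-1 - α₂)) :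
    Filter.Tendsto (fun x => tail2 (conv2 (F₁.prod F₂)) x / tail2 (F₁.prod F₂) x)
      minAtTop2 (nhds 2) := by
  have hnonneg : ∀ᵐ y ∂F₁.prod F₂, 0 ≤ y := by
    filter_upwards [Measure.quasiMeasurePreserving_fst.ae (measure_eq_zero_iff_ae_notMem.1 hsupp₁),
      Measure.quasiMeasurePreserving_snd.ae (measure_eq_zero_iff_ae_notMem.1 hsupp₂)]
      with y h₁ h₂ using ⟨not_lt.1 h₁, not_lt.1 h₂⟩
  have hpos : ∀ᶠ x in atTop, 0 < tail2 (F₁.prod F₂) x := by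
    filter_upwards [eventually_ge_atTop 0] with x hx
    refine lt_of_lt_of_le ?_ (measureReal_Ioi_fst_le_tail2_prod F₁ F₂ x)
    rw [Measure.real, htail₁ _ hx.1]
    positivity
  have hk : ContinuousAt (fun t : ℝ => max (t ^ (-1 - α₁)) (t ^ (-1 - α₂))) 1 :=
    (Real.continuousAt_rpow_const _ _ (Or.inl one_ne_zero)).max
      (Real.continuousAt_rpow_const _ _ (Or.inl one_ne_zero))
  rw [minAtTop2_eq_atTop]
  refine tendsto_tail2_conv2_div_tail2 _ hnonneg hpos _
    (by simpa using hk.tendsto.mono_left nhdsWithin_le_nhds) fun t ht => ?_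
  have hexp : ∀ α : ℝ, 0 < α → 1 ≤ t ^ (-1 - α) := fun α hα =>
    Real.one_le_rpow_of_pos_of_le_one_of_nonpos ht.1 ht.2.le (by linarith)
  have hscaled : ∀ z, t⁻¹ ≤ z → 1 ≤ z ∧ 1 ≤ t * z := fun z hz =>
    ⟨((one_le_inv₀ ht.1).2 ht.2.le).trans hz, (inv_le_iff_one_le_mul₀' ht.1).1 hz⟩
  filter_upwards [eventually_ge_atTop (t⁻¹, t⁻¹)] with x hx
  obtain ⟨hx₁, htx₁⟩ := hscaled _ hx.1
  obtain ⟨hx₂, htx₂⟩ := hscaled _ hx.2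
  exact tail2_prod_smul_le F₁ F₂ (hexp α₁ hα₁) (hexp α₂ hα₂)
    (measureReal_Ioi_mul_eq_rpow_mul htail₁ ht.1 hx₁ htx₁)
    (measureReal_Ioi_mul_eq_rpow_mul htail₂ ht.1 hx₂ htx₂)

/-- Example 4.8 of the paper.  The product `F = F₁ ⊗ F₂` of two
Pareto-type marginals with tails `F̄ᵢ(z) = cᵢ (z ∨ 1)^{-1-αᵢ}` for `z ≥ 0` is weakly
subexponential on `ℝ²_+`: `lim_{x⁰→∞} F̄^{*2}(x)/F̄(x) = 2`. -/
theorem product_pareto_weakly_subexponential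
    (α₁ α₂ c₁ c₂ : ℝ) (hα₁ : 0 < α₁) (hα₂ : 0 < α₂)
    (hc₁ : 0 < c₁) (hc₁' : c₁ ≤ 1) (hc₂ : 0 < c₂) (hc₂' : c₂ ≤ 1)
    (F₁ F₂ : Measure ℝ) [IsProbabilityMeasure F₁] [IsProbabilityMeasure F₂]
    (hsupp₁ : F₁ (Set.Iio (0 : ℝ)) = 0) (hsupp₂ : F₂ (Set.Iio (0 : ℝ)) = 0)
    (htail₁ : ∀ z : ℝ, 0 ≤ z →
      (F₁ (Set.Ioi z)).toReal = c₁ * (max z 1) ^ (-1 - α₁))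
    (htail₂ : ∀ z : ℝ, 0 ≤ z →
      (F₂ (Set.Ioi z)).toReal = c₂ * (max z 1) ^ (-1 - α₂)) :
    Filter.Tendsto (fun x => tail2 (conv2 (F₁.prod F₂)) x / tail2 (F₁.prod F₂) x)
      minAtTop2 (nhds 2) :=
  product_pareto_weakly_subexponential_general α₁ α₂ c₁ c₂ hα₁ hα₂ hc₁ F₁ F₂ hsupp₁ hsupp₂ htail₁
    htail₂
end
end

section
/- Let ϱ ∈ (0,1) and let Ξ be a nonnegative random variable whose distribution H on [0,∞) is subexponential (H̄(z) = 1 − H(z) > 0 for all z and lim_{z→∞} H̄^{*2}(z)/H̄(z) = 2). Let F be the distribution on ℝ²_+ of the vector U = (ϱΞ, (1−ϱ)Ξ). Then the tail of F satisfies F̄(x) = 1 − F(x) = H̄(min(x_1/ϱ, x_2/(1−ϱ))) for x ∈ ℝ²_+, and F is weakly subexponential on ℝ²_+: lim_{x⁰→∞} F̄^{*2}(x)/F̄(x) = 2, where x⁰ = min(x_1, x_2). -/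
open MeasureTheory Filter Topology
open scoped ENNReal

noncomputable section

/-- Convolution of two distributions on `ℝ`. -/
def conv1 (H : Measure ℝ) : Measure ℝ :=
  (H.prod H).map (fun p => p.1 + p.2)

/-! Since `F` is the image of `H` under the additive map `ξ ↦ (ϱξ, (1-ϱ)ξ)`, so is `F^{*2}`
the image of `H^{*2}`, and both tails at `x` are the corresponding one-dimensional tails at
`min(x₁/ϱ, x₂/(1-ϱ))`. This point tends to `∞` with `x⁰`, so the ratio of the two-dimensional
tails is the subexponential ratio of `H` evaluated along a path tending to `∞`. -/

theorem Filter.Tendsto.min_atTop {α β : Type*} [LinearOrder β] {l : Filter α}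
    {f g : α → β} (hf : Tendsto f l atTop) (hg : Tendsto g l atTop) :
    Tendsto (fun a => min (f a) (g a)) l atTop :=
  tendsto_atTop.2 fun b =>
    ((hf.eventually_ge_atTop b).and (hg.eventually_ge_atTop b)).mono fun _ h => le_min h.1 h.2

theorem tendsto_fst_minAtTop2 : Tendsto Prod.fst minAtTop2 atTop :=
  tendsto_atTop_mono (fun x => min_le_left x.1 x.2) tendsto_comap

theorem tendsto_snd_minAtTop2 : Tendsto Prod.snd minAtTop2 atTop :=
  tendsto_atTop_mono (fun x => min_le_right x.1 x.2) tendsto_comap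

theorem measurableSet_tail2_set (x : ℝ × ℝ) :
    MeasurableSet {y : ℝ × ℝ | ¬ (y.1 ≤ x.1 ∧ y.2 ≤ x.2)} :=
  (measurableSet_Iic.prod measurableSet_Iic).compl

theorem conv2_map_of_map_add (μ : Measure ℝ) [SFinite μ] {T : ℝ → ℝ × ℝ} (hT : Measurable T)
    (hT_add : ∀ a b, T (a + b) = T a + T b) :
    conv2 (μ.map T) = (conv1 μ).map T := by
  rw [conv2, conv1, Measure.map_prod_map _ _ hT hT,
    Measure.map_map measurable_add (hT.prodMap hT), Measure.map_map hT measurable_add]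
  congr 1
  funext p
  exact (hT_add p.1 p.2).symm

theorem measurable_propSplit (ϱ : ℝ) : Measurable fun ξ : ℝ => (ϱ * ξ, (1 - ϱ) * ξ) :=
  (measurable_const_mul ϱ).prodMk (measurable_const_mul (1 - ϱ))

theorem tail2_map_propSplit {ϱ : ℝ} (hϱ0 : 0 < ϱ) (hϱ1 : ϱ < 1) (μ : Measure ℝ)
    (x : ℝ × ℝ) :
    tail2 (μ.map (fun ξ : ℝ => (ϱ * ξ, (1 - ϱ) * ξ))) x
      = (μ (Set.Ioi (min (x.1 / ϱ) (x.2 / (1 - ϱ))))).toReal := by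
  have hϱ1' : 0 < 1 - ϱ := sub_pos.2 hϱ1
  have hpre : (fun ξ : ℝ => (ϱ * ξ, (1 - ϱ) * ξ)) ⁻¹' {y | ¬ (y.1 ≤ x.1 ∧ y.2 ≤ x.2)}
      = Set.Ioi (min (x.1 / ϱ) (x.2 / (1 - ϱ))) := by
    ext ξ
    simp only [Set.mem_preimage, Set.mem_ofPred_eq, Set.mem_Ioi, not_and_or, not_le,
      min_lt_iff, div_lt_iff₀' hϱ0, div_lt_iff₀' hϱ1']
  rw [tail2, Measure.map_apply (measurable_propSplit ϱ) (measurableSet_tail2_set x), hpre]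

theorem proportional_split_weakly_subexponential_general
    (ϱ : ℝ) (hϱ0 : 0 < ϱ) (hϱ1 : ϱ < 1)
    (H : Measure ℝ) [IsProbabilityMeasure H]
    (hsubexp : Filter.Tendsto
      (fun z : ℝ => ((conv1 H) (Set.Ioi z)).toReal / (H (Set.Ioi z)).toReal)
      Filter.atTop (nhds 2)) :
    (∀ x : ℝ × ℝ, 0 < x.1 → 0 < x.2 →
      tail2 (H.map (fun ξ : ℝ => (ϱ * ξ, (1 - ϱ) * ξ))) x
        = (H (Set.Ioi (min (x.1 / ϱ) (x.2 / (1 - ϱ))))).toReal) ∧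
    Filter.Tendsto
      (fun x =>
        tail2 (conv2 (H.map (fun ξ : ℝ => (ϱ * ξ, (1 - ϱ) * ξ)))) x
          / tail2 (H.map (fun ξ : ℝ => (ϱ * ξ, (1 - ϱ) * ξ))) x)
      minAtTop2 (nhds 2) := by
  refine ⟨fun x _ _ => tail2_map_propSplit hϱ0 hϱ1 H x, ?_⟩
  have hconv := conv2_map_of_map_add H (measurable_propSplit ϱ) fun a b => by
    simp only [Prod.mk_add_mk, mul_add]
  have hmin : Tendsto (fun x : ℝ × ℝ => min (x.1 / ϱ) (x.2 / (1 - ϱ))) minAtTop2 atTop :=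
    (tendsto_fst_minAtTop2.atTop_div_const hϱ0).min_atTop
      (tendsto_snd_minAtTop2.atTop_div_const (sub_pos.2 hϱ1))
  simp only [hconv, tail2_map_propSplit hϱ0 hϱ1]
  exact hsubexp.comp hmin

/-- Example 4.9 of the paper: proportional reinsurance.  If `Ξ` has a
subexponential distribution `H` on `[0,∞)` and `F` is the law of `(ϱΞ, (1-ϱ)Ξ)`, then
`F̄(x) = H̄(min(x₁/ϱ, x₂/(1-ϱ)))` on `ℝ²_+`, and `F` is weakly subexponential:
`lim_{x⁰→∞} F̄^{*2}(x)/F̄(x) = 2`. -/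
theorem proportional_split_weakly_subexponential
    (ϱ : ℝ) (hϱ0 : 0 < ϱ) (hϱ1 : ϱ < 1)
    (H : Measure ℝ) [IsProbabilityMeasure H]
    (hsupp : H (Set.Iio (0 : ℝ)) = 0)
    (hpos : ∀ z : ℝ, 0 < (H (Set.Ioi z)).toReal)
    (hsubexp : Filter.Tendsto
      (fun z : ℝ => ((conv1 H) (Set.Ioi z)).toReal / (H (Set.Ioi z)).toReal)
      Filter.atTop (nhds 2)) :
    (∀ x : ℝ × ℝ, 0 < x.1 → 0 < x.2 →
      tail2 (H.map (fun ξ : ℝ => (ϱ * ξ, (1 - ϱ) * ξ))) x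
        = (H (Set.Ioi (min (x.1 / ϱ) (x.2 / (1 - ϱ))))).toReal) ∧
    Filter.Tendsto
      (fun x =>
        tail2 (conv2 (H.map (fun ξ : ℝ => (ϱ * ξ, (1 - ϱ) * ξ)))) x
          / tail2 (H.map (fun ξ : ℝ => (ϱ * ξ, (1 - ϱ) * ξ))) x)
      minAtTop2 (nhds 2) :=
  proportional_split_weakly_subexponential_general ϱ hϱ0 hϱ1 H hsubexp
end
end
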